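/- arXiv:math/0001163 — 4 statements merged into one kernel-verified Lean document; each statement's English description precedes it below -/
import Mathlib

section
/- For the Kirchhoff matrix C = D - G of a weighted digraph G on N vertices, det(λI - C) = (-1)^N Σ_{k=0}^{N} (-λ)^k Σ_{F ∈ F^k(G)} π_F, where F^k(G) is the set of spanning forests of G with exactly k trees (each tree an in-forest with all arcs oriented toward its root), and π_F = Π_{(i,j)∈A(F)} g_ij. -/
open scoped Classical
open Finset

noncomputable section

/-- The step relation of an out-neighbor map: there is an arc from `a` to `b`. -/
def FStep {V : Type*} (f : V → Option V) (a b : V) : Prop := f a = some b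

/-- A forest: a digraph in which every vertex has out-degree ≤ 1 (encoded by the
out-neighbor map `f`) and which has no directed circuits. -/
def IsForest {V : Type*} (f : V → Option V) : Prop :=
  ∀ v, ¬ Relation.TransGen (FStep f) v v

/-- The roots of a forest: vertices of out-degree 0.  For a forest, the number of
trees (connected components) equals the number of roots. -/
def roots {V : Type*} [Fintype V] (f : V → Option V) : Finset V :=
  Finset.univ.filter (fun v => f v = none)

/-- `Reach f a b`: the directed path out of `a` (following arcs) passes through `b`. -/
def Reach {V : Type*} (f : V → Option V) (a b : V) : Prop :=
  Relation.ReflTransGen (FStep f) a b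

/-- The productivity π_F of a forest: product of the weights of its arcs. -/
def forestProd {V K : Type*} [Fintype V] [CommRing K] (w : V → V → K)
    (f : V → Option V) : K :=
  ∏ v, (match f v with | some u => w v u | none => 1)

/-- Arc weights of the augmented digraph G† on vertex set `Option (Fin N)`,
where `none` plays the role of the extra vertex †: arcs (i,j), i ≠ j, have
weight g_ij, arcs (i,†) have weight -Σ_j g_ij; there are no loops and no
arcs out of †. -/
def daggerWeight {N : ℕ} {K : Type*} [CommRing K] (G : Matrix (Fin N) (Fin N) K) :
    Option (Fin N) → Option (Fin N) → K
  | some i, some j => if i = j then 0 else G i j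
  | some i, none => -(∑ j, G i j)
  | none, _ => 0


/-!
Row `i` of `μ • 1 + (D - G)` is `μ eᵢ + ∑ⱼ gᵢⱼ (eᵢ - eⱼ)`. Expanding the determinant
multilinearly in the rows gives a sum over all maps `f : V → Option V` (in row `i` choose either
the term `μ eᵢ`, i.e. `f i = none`, or an arc `i → j`) of `μ ^ #(roots f) * π_f * det (1 - A_f)`,
where `A_f` is the adjacency matrix of `f`. If `f` has a dicircuit through `v`, the indicator of
the vertices with a path to `v` is a null vector of `1 - A_f`; otherwise, ordering the vertices
by their number of descendants makes `1 - A_f` unitriangular. So `det (1 - A_f)` is `1` on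
forests and `0` on all other maps.
-/

open Matrix

section

variable {V K : Type*} [CommRing K]

def arcMatrix (f : V → Option V) : Matrix V V K :=
  Matrix.of fun i j => if f i = some j then 1 else 0

lemma arcMatrix_mulVec [Fintype V] (f : V → Option V) (x : V → K) (i : V) :
    (arcMatrix f *ᵥ x) i = (f i).elim 0 x := by
  rcases h : f i with _ | j <;> simp [arcMatrix, mulVec, dotProduct, h]

lemma one_sub_arcMatrix_row [DecidableEq V] (f : V → Option V) (i : V) :
    (1 - arcMatrix f : Matrix V V K) i =
      Pi.single i 1 - (f i).elim 0 (fun j => Pi.single j 1) := by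
  ext k
  rcases h : f i with _ | j <;> simp [arcMatrix, one_apply, Pi.single_apply, h, eq_comm]

lemma transGen_iff_exists_step_of_transGen_self {f : V → Option V} {v : V}
    (hv : Relation.TransGen (FStep f) v v) (i : V) :
    Relation.TransGen (FStep f) i v ↔ ∃ j, f i = some j ∧ Relation.TransGen (FStep f) j v := by
  refine ⟨fun h => ?_, fun ⟨j, hij, hj⟩ => hj.head hij⟩
  obtain ⟨j, hij, hj⟩ := Relation.TransGen.head'_iff.mp h
  exact ⟨j, hij, Relation.TransGen.trans_right hj hv⟩

lemma det_one_sub_arcMatrix_of_not_isForest [Fintype V] [DecidableEq V] {f : V → Option V}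
    (hf : ¬ IsForest f) : (1 - arcMatrix f : Matrix V V K).det = 0 := by
  obtain ⟨v, hv⟩ : ∃ v, Relation.TransGen (FStep f) v v := by
    simpa [IsForest] using hf
  let x : V → K := fun i => if Relation.TransGen (FStep f) i v then 1 else 0
  have hx : (1 - arcMatrix f) *ᵥ x = 0 := by
    ext i
    rw [sub_mulVec, Pi.sub_apply, one_mulVec, arcMatrix_mulVec, Pi.zero_apply, sub_eq_zero]
    simp only [x, transGen_iff_exists_step_of_transGen_self hv i]
    rcases f i with _ | j <;> simp
  exact det_eq_zero_of_mulVec_eq_zero_of_mem_nonZeroDivisors hx (i := v)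
    (by simp [x, hv, one_mem])

lemma card_descendants_eq_succ [Fintype V] {f : V → Option V} (hf : IsForest f) {i j : V}
    (hij : f i = some j) :
    #{k | Relation.TransGen (FStep f) i k} = #{k | Relation.TransGen (FStep f) j k} + 1 := by
  have hdesc : (univ.filter fun k => Relation.TransGen (FStep f) i k) =
      insert j (univ.filter fun k => Relation.TransGen (FStep f) j k) := by
    ext k
    simp only [mem_filter, mem_univ, true_and, mem_insert]
    rw [Relation.TransGen.head'_iff]
    simp [FStep, hij, Relation.reflTransGen_iff_eq_or_transGen, eq_comm]
  rw [hdesc, card_insert_of_notMem (by simpa using hf j)]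

lemma det_one_sub_arcMatrix_of_isForest [Fintype V] [DecidableEq V] {f : V → Option V}
    (hf : IsForest f) : (1 - arcMatrix f : Matrix V V K).det = 1 := by
  set d : V → ℕ := fun i => #{k | Relation.TransGen (FStep f) i k}
  have harc : ∀ i j, arcMatrix f i j ≠ (0 : K) → d i = d j + 1 := by
    intro i j h
    have hij : f i = some j := by by_contra h'; simp [arcMatrix, h'] at h
    exact card_descendants_eq_succ hf hij
  have htri : (1 - arcMatrix f : Matrix V V K).BlockTriangular (OrderDual.toDual ∘ d) := by
    intro i j (hlt : d i < d j)
    have hij : i ≠ j := by rintro rfl; exact lt_irrefl _ hlt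
    rw [Matrix.sub_apply, one_apply_ne hij, zero_sub, neg_eq_zero]
    by_contra h
    have := harc i j h
    omega
  rw [htri.det]
  refine Finset.prod_eq_one fun a _ => ?_
  suffices h : (1 - arcMatrix f : Matrix V V K).toSquareBlock (OrderDual.toDual ∘ d) a = 1 by
    rw [h, det_one]
  ext ⟨i, hi⟩ ⟨j, hj⟩
  have hd : d i = d j := hi.trans hj.symm
  have hzero : arcMatrix f i j = (0 : K) := by
    by_contra h
    have := harc i j h
    omega
  simp [toSquareBlock_def, hzero, one_apply]

lemma det_one_sub_arcMatrix [Fintype V] [DecidableEq V] (f : V → Option V) :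
    (1 - arcMatrix f : Matrix V V K).det = if IsForest f then 1 else 0 := by
  split_ifs with hf
  exacts [det_one_sub_arcMatrix_of_isForest hf, det_one_sub_arcMatrix_of_not_isForest hf]

lemma smul_one_add_laplacian_row [Fintype V] [DecidableEq V] (G : Matrix V V K) (μ : K) (i : V) :
    (μ • 1 + (diagonal (fun i => ∑ j, G i j) - G)) i =
      ∑ o : Option V,
        o.elim μ (fun j => G i j) • (Pi.single i 1 - o.elim 0 (fun j => Pi.single j 1)) := by
  ext k
  rcases eq_or_ne i k with rfl | hik
  · simp [Fintype.sum_option, Finset.sum_apply, Pi.single_apply, mul_sub, add_sub_assoc]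
  · simp [Fintype.sum_option, Finset.sum_apply, Pi.single_apply, one_apply_ne hik, hik]

lemma prod_elim_eq_pow_card_roots_mul_forestProd [Fintype V] (w : V → V → K) (μ : K)
    (f : V → Option V) : ∏ i, (f i).elim μ (w i) = μ ^ #(roots f) * forestProd w f := by
  unfold roots forestProd
  rw [← prod_const, prod_filter, ← prod_mul_distrib]
  refine prod_congr rfl fun i _ => ?_
  rcases f i with _ | j <;> simp

theorem det_smul_one_add_laplacian [Fintype V] [DecidableEq V] (G : Matrix V V K) (μ : K) :
    (μ • 1 + (diagonal (fun i => ∑ j, G i j) - G)).det =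
      ∑ f ∈ univ.filter IsForest, μ ^ #(roots f) * forestProd (fun i j => G i j) f := by
  calc _ = detRowAlternating fun i => ∑ o : Option V,
        o.elim μ (fun j => G i j) • (Pi.single i 1 - o.elim 0 (fun j => Pi.single j 1)) := by
        rw [det]; congr 1; ext i : 1; exact smul_one_add_laplacian_row G μ i
    _ = ∑ f : V → Option V,
          (∏ i, (f i).elim μ (fun j => G i j)) * (1 - arcMatrix f : Matrix V V K).det := by
        rw [← AlternatingMap.coe_multilinearMap, MultilinearMap.map_sum]
        refine sum_congr rfl fun f _ => ?_
        rw [MultilinearMap.map_smul_univ, smul_eq_mul, AlternatingMap.coe_multilinearMap, det]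
        congr 2
        ext i : 1
        rw [one_sub_arcMatrix_row]
    _ = _ := by
        simp_rw [det_one_sub_arcMatrix, mul_ite, mul_one, mul_zero, ← sum_filter,
          prod_elim_eq_pow_card_roots_mul_forestProd]

lemma sum_forests_eq_sum_range_card_roots [Fintype V] [DecidableEq V] (w : V → V → K) (μ : K) :
    ∑ f ∈ univ.filter IsForest, μ ^ #(roots f) * forestProd w f =
      ∑ k ∈ range (Fintype.card V + 1),
        μ ^ k * ∑ f ∈ univ.filter (fun f => IsForest f ∧ #(roots f) = k), forestProd w f := by
  rw [← sum_fiberwise_of_maps_to (g := fun f => #(roots f)) (t := range (Fintype.card V + 1))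
    fun f _ => mem_range_succ_iff.mpr (card_le_univ _)]
  refine sum_congr rfl fun k _ => ?_
  rw [mul_sum, filter_filter]
  exact sum_congr rfl fun f hf => by rw [(mem_filter.mp hf).2.2]

lemma forestProd_eq_zero_of_arc [Fintype V] {w : V → V → K} {f : V → Option V} {i j : V}
    (hij : f i = some j) (hw : w i j = 0) : forestProd w f = 0 :=
  prod_eq_zero (mem_univ i) (by simp [hij, hw])

lemma finsum_forests_eq_sum [Fintype V] [DecidableEq V] (w : V → V → K) (k : ℕ) :
    ∑ᶠ f ∈ {f : V → Option V | IsForest f ∧ (∀ i j, f i = some j → w i j ≠ 0) ∧ #(roots f) = k},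
        forestProd w f =
      ∑ f ∈ univ.filter (fun f => IsForest f ∧ #(roots f) = k), forestProd w f := by
  refine finsum_mem_eq_sum_of_inter_support_eq _ ?_
  ext f
  simp only [Set.mem_inter_iff, Set.mem_ofPred_eq, Function.mem_support, coe_filter, mem_univ,
    true_and]
  refine ⟨fun ⟨⟨hf, _, hk⟩, h⟩ => ⟨⟨hf, hk⟩, h⟩, fun ⟨⟨hf, hk⟩, h⟩ => ⟨⟨hf, ?_, hk⟩, h⟩⟩
  exact fun i j hij hw => h (forestProd_eq_zero_of_arc hij hw)

end

/-- Characteristic polynomial of the Kirchhoff matrix C = D - G in terms of the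
spanning forests of the weighted digraph G. -/
theorem stmt1 {N : ℕ} (G : Matrix (Fin N) (Fin N) ℂ) (lam : ℂ) :
    (lam • (1 : Matrix (Fin N) (Fin N) ℂ) -
        (Matrix.diagonal (fun i => ∑ j, G i j) - G)).det =
      (-1 : ℂ) ^ N * ∑ k ∈ Finset.range (N + 1), (-lam) ^ k *
        ∑ᶠ f ∈ {f : Fin N → Option (Fin N) |
            IsForest f ∧ (∀ i j, f i = some j → G i j ≠ 0) ∧ (roots f).card = k},
          forestProd (fun i j => G i j) f := by
  have hneg : lam • (1 : Matrix (Fin N) (Fin N) ℂ) - (diagonal (fun i => ∑ j, G i j) - G) =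
      -((-lam) • 1 + (diagonal (fun i => ∑ j, G i j) - G)) := by
    rw [neg_add', neg_smul, neg_neg]
  rw [hneg, det_neg, Fintype.card_fin, det_smul_one_add_laplacian,
    sum_forests_eq_sum_range_card_roots (fun i j => G i j), Fintype.card_fin]
  simp_rw [finsum_forests_eq_sum (fun i j => G i j)]
end
end

section
/- Let G be an arbitrary N×N matrix. Form the augmented digraph G† on vertex set {1,...,N,†} whose arcs are the off-diagonal arcs (i,j) with weight g_ij together with arcs (i,†) of weight g_{i†} = -Σ_{j=1}^N g_ij. Then det(λI - G) = Σ_{k=0}^{N} λ^k Σ_{F ∈ F^k_†} π_F, where F^k_† is the set of spanning forests of G† with exactly k+1 trees whose roots include †, and π_F is the product of arc weights of F. -/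
open scoped Classical
open Finset

noncomputable section

/-!
Write `λ • 1 - G = λ • 1 + L`, where `L` is the Laplacian of `G†` with the row and column of `†`
deleted. Row `i` of `λ • 1 + L` is `λ eᵢ + ∑ₓ g_{ix} (eᵢ - eₓ)` (with `e_† = 0`), so
multilinearity of the determinant in the rows expands `det (λ • 1 - G)` over all choices `φ` of
at most one out-arc per vertex: the term of `φ` is `λ^k π_φ det (1 - A_φ)`, where `k` counts the
roots other than `†` and `A_φ` is the adjacency matrix of the arcs of `φ` between vertices of
`{1, …, N}`. That determinant is `1` when `φ` is a forest and `0` when it has a circuit.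
-/

open Matrix Relation

section Successor

variable {W : Type*}

lemma reach_of_fStep_of_reach {h : W → Option W} {i j v : W} (hij : FStep h i j)
    (hiv : Reach h i v) (hv : TransGen (FStep h) v v) : Reach h j v := by
  rcases hiv.cases_head with rfl | ⟨k, hik, hkv⟩
  · obtain ⟨k, hik, hkv⟩ := TransGen.head'_iff.mp hv
    rwa [Option.some_injective _ (Eq.trans (Eq.symm hij) hik)]
  · rwa [Option.some_injective _ (Eq.trans (Eq.symm hij) hik)]

lemma IsForest.wellFounded [Finite W] {h : W → Option W} (hh : IsForest h) :
    WellFounded (TransGen (FStep h)) :=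
  haveI : Std.Irrefl (TransGen (FStep h)) := ⟨hh⟩
  Finite.wellFounded_of_trans_of_irrefl _

variable [DecidableEq W]

def succMatrix (R : Type*) [CommRing R] (h : W → Option W) : Matrix W W R :=
  of fun i => (h i).elim 0 (Pi.single · 1)

variable {R : Type*} [CommRing R]

lemma succMatrix_apply (h : W → Option W) (i j : W) :
    succMatrix R h i j = if h i = some j then 1 else 0 := by
  cases hi : h i <;> simp [succMatrix, hi, Pi.single_apply, eq_comm]

variable [Fintype W]

lemma succMatrix_mulVec (h : W → Option W) (y : W → R) (i : W) :
    (succMatrix R h *ᵥ y) i = (h i).elim 0 y := by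
  cases hi : h i <;> simp [succMatrix_apply, mulVec, dotProduct, hi]

lemma det_one_sub_succMatrix_of_not_isForest {h : W → Option W} (hh : ¬ IsForest h) :
    (1 - succMatrix R h).det = 0 := by
  obtain ⟨v, hv⟩ := not_forall_not.mp hh
  -- The indicator of the vertices that reach the circuit through `v` is constant along arcs
  -- and vanishes at roots, so it lies in the kernel.
  refine det_eq_zero_of_mulVec_eq_zero_of_mem_nonZeroDivisors
    (v := fun i => if Reach h i v then 1 else 0) (i := v) ?_ (by simp [show Reach h v v from .refl])
  funext i
  rw [sub_mulVec, one_mulVec, Pi.sub_apply, succMatrix_mulVec, Pi.zero_apply]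
  cases hi : h i with
  | none =>
    have hiv : ¬ Reach h i v := fun hiv => by
      rcases hiv.cases_head with rfl | ⟨k, hik, -⟩
      · obtain ⟨k, hik, -⟩ := TransGen.head'_iff.mp hv
        exact absurd (hi.symm.trans hik) (by simp)
      · exact absurd (hi.symm.trans hik) (by simp)
    simp [hiv]
  | some j =>
    have hiv : Reach h i v ↔ Reach h j v :=
      ⟨fun hiv => reach_of_fStep_of_reach hi hiv hv, fun hjv => ReflTransGen.head hi hjv⟩
    simp [hiv]

lemma det_one_sub_succMatrix_of_isForest {h : W → Option W} (hh : IsForest h) :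
    (1 - succMatrix R h).det = 1 := by
  have hloop : ∀ i, h i ≠ some i := fun i hi => hh i (TransGen.single hi)
  rw [det_apply', Finset.sum_eq_single 1]
  · simp [succMatrix_apply, hloop]
  · intro σ _ hσ
    -- A vertex `m` of `σ.support` reaching no other vertex of it gets no arc from `σ m`.
    obtain ⟨m, hm, hmin⟩ := hh.wellFounded.has_min (σ.support : Set W)
      (Finset.coe_nonempty.mpr (Finset.nonempty_iff_ne_empty.mpr
        (mt Equiv.Perm.support_eq_empty_iff.mp hσ)))
    have hno : h (σ m) ≠ some m := fun hstep =>
      hmin (σ m) (Equiv.Perm.apply_mem_support.mpr hm) (TransGen.single hstep)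
    refine mul_eq_zero_of_right _ (Finset.prod_eq_zero (Finset.mem_univ m) ?_)
    simp [succMatrix_apply, one_apply, Equiv.Perm.mem_support.mp hm, hno]
  · simp

lemma det_one_sub_succMatrix (h : W → Option W) :
    (1 - succMatrix R h).det = if IsForest h then 1 else 0 := by
  split_ifs with hh
  · exact det_one_sub_succMatrix_of_isForest hh
  · exact det_one_sub_succMatrix_of_not_isForest hh

end Successor

section Laplacian

variable {W R : Type*} [Fintype W] [DecidableEq W] [CommRing R]

/-- The Laplacian of the digraph on `Option W` with weight `w i x` on the arc `i → x`, with the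
row and column of `none` deleted. -/
def groundedLaplacian (w : W → Option W → R) : Matrix W W R :=
  of fun i j => (if i = j then ∑ x, w i x else 0) - w i (some j)

lemma smul_one_add_groundedLaplacian_eq_sum (w : W → Option W → R) (lam : R) :
    lam • 1 + groundedLaplacian w = of fun i => ∑ y : Option (Option W),
      y.elim lam (w i) • ((1 : Matrix W W R) i - y.join.elim 0 (Pi.single · 1)) := by
  ext i j
  simp only [Matrix.add_apply, Matrix.smul_apply, groundedLaplacian, of_apply, Fintype.sum_option]
  simp [one_apply, Pi.single_apply, mul_sub, Finset.sum_sub_distrib]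
  split_ifs <;> ring

theorem det_smul_one_add_groundedLaplacian (w : W → Option W → R) (lam : R) :
    (lam • 1 + groundedLaplacian w).det = ∑ φ : W → Option (Option W),
      if IsForest (fun i => (φ i).join) then ∏ i, (φ i).elim lam (w i) else 0 := by
  rw [smul_one_add_groundedLaplacian_eq_sum, det]
  change detRowAlternating.toMultilinearMap (fun i => ∑ y, _) = _
  rw [MultilinearMap.map_sum]
  refine Finset.sum_congr rfl fun φ _ => ?_
  rw [MultilinearMap.map_smul_univ, smul_eq_mul]
  change _ * (1 - succMatrix R fun i => (φ i).join).det = _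
  rw [det_one_sub_succMatrix, mul_ite, mul_one, mul_zero]

end Laplacian

section Extension

variable {W : Type*}

def extendNone (φ : W → Option (Option W)) : Option W → Option (Option W) :=
  fun v => v.elim none φ

lemma extendNone_comp_some {f : Option W → Option (Option W)} (hf : f none = none) :
    extendNone (f ∘ some) = f := by
  funext v
  cases v
  · exact hf.symm
  · rfl

lemma extendNone_injective : Function.Injective (extendNone (W := W)) :=
  fun _ _ h => funext fun i => congrFun h (some i)

lemma exists_transGen_of_transGen_extendNone {φ : W → Option (Option W)} {a : Option W} {j : W}
    (ha : TransGen (FStep (extendNone φ)) a (some j)) :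
    ∃ i, a = some i ∧ TransGen (FStep fun i => (φ i).join) i j := by
  induction ha using TransGen.head_induction_on with
  | @single a hstep =>
    cases a with
    | none => exact absurd hstep (by simp [FStep, extendNone])
    | some i => exact ⟨i, rfl, .single (Option.join_eq_some_iff.mpr hstep)⟩
  | @head a c hstep _ ih =>
    obtain ⟨k, rfl, hk⟩ := ih
    cases a with
    | none => exact absurd hstep (by simp [FStep, extendNone])
    | some i => exact ⟨i, rfl, .head (Option.join_eq_some_iff.mpr hstep) hk⟩

lemma isForest_extendNone_iff (φ : W → Option (Option W)) :
    IsForest (extendNone φ) ↔ IsForest fun i => (φ i).join := by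
  refine ⟨fun hf i hi => hf (some i) (hi.lift some fun a b hab => ?_), fun hf v hv => ?_⟩
  · exact Option.join_eq_some_iff.mp hab
  · cases v with
    | none =>
      obtain ⟨b, hb, -⟩ := TransGen.head'_iff.mp hv
      simp [FStep, extendNone] at hb
    | some i =>
      obtain ⟨i', hi', hcyc⟩ := exists_transGen_of_transGen_extendNone hv
      cases Option.some_injective _ hi'
      exact hf i hcyc

variable [Fintype W] {R : Type*} [CommRing R]

lemma card_roots_extendNone (φ : W → Option (Option W)) :
    (roots (extendNone φ)).card = #{i | φ i = none} + 1 := by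
  rw [roots, Finset.card_filter, Fintype.sum_option, Finset.card_filter]
  simp only [extendNone, Option.elim_none, Option.elim_some, if_true]
  exact add_comm _ _

lemma prod_elim_eq_pow_mul_forestProd (w : Option W → Option W → R) (lam : R)
    (φ : W → Option (Option W)) :
    ∏ i, (φ i).elim lam (w (some i)) =
      lam ^ #{i | φ i = none} * forestProd w (extendNone φ) := by
  simp only [forestProd, Fintype.prod_option, extendNone, Option.elim_none, Option.elim_some,
    one_mul]
  rw [← Finset.prod_const, Finset.prod_filter, ← Finset.prod_mul_distrib]
  refine Finset.prod_congr rfl fun i _ => ?_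
  cases φ i <;> simp

lemma forests_eq_image_extendNone (k : ℕ) :
    {f : Option W → Option (Option W) | IsForest f ∧ f none = none ∧ (roots f).card = k + 1} =
      extendNone '' {φ | IsForest (extendNone φ) ∧ #{i | φ i = none} = k} := by
  ext f
  constructor
  · rintro ⟨hf, hnone, hk⟩
    rw [← extendNone_comp_some hnone] at hf hk
    rw [card_roots_extendNone] at hk
    exact ⟨f ∘ some, ⟨hf, by omega⟩, extendNone_comp_some hnone⟩
  · rintro ⟨φ, ⟨hf, hk⟩, rfl⟩
    exact ⟨hf, rfl, by rw [card_roots_extendNone, hk]⟩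

variable [DecidableEq W]

lemma sum_range_pow_mul_finsum_forests (w : Option W → Option W → R) (lam : R) {n : ℕ}
    (hn : Fintype.card W ≤ n) :
    ∑ k ∈ Finset.range (n + 1), lam ^ k *
        ∑ᶠ f ∈ {f : Option W → Option (Option W) |
            IsForest f ∧ f none = none ∧ (roots f).card = k + 1}, forestProd w f =
      ∑ φ : W → Option (Option W), if IsForest (extendNone φ) then
        lam ^ #{i | φ i = none} * forestProd w (extendNone φ) else 0 := by
  simp_rw [forests_eq_image_extendNone, finsum_mem_image extendNone_injective.injOn,
    finsum_mem_def, finsum_eq_sum_of_fintype, Finset.mul_sum]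
  rw [Finset.sum_comm]
  refine Finset.sum_congr rfl fun φ _ => ?_
  have hk : #{i | φ i = none} < n + 1 := Nat.lt_succ_of_le ((Finset.card_le_univ _).trans hn)
  by_cases hf : IsForest (extendNone φ) <;> simp [Set.indicator_apply, hf, hk]

end Extension

lemma groundedLaplacian_daggerWeight {N : ℕ} {K : Type*} [CommRing K]
    (G : Matrix (Fin N) (Fin N) K) :
    groundedLaplacian (fun i => daggerWeight G (some i)) = -G := by
  ext i j
  simp only [groundedLaplacian, daggerWeight, of_apply, Fintype.sum_option]
  split_ifs with hij
  · subst hij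
    rw [← Finset.sum_filter_add_sum_filter_not Finset.univ (i = ·), Finset.filter_eq]
    simp [Finset.sum_ite]
  · simp

/-- Theorem 1: the characteristic polynomial of an arbitrary matrix G expressed
through spanning forests of the augmented digraph G† with k+1 trees whose roots
include †. -/
theorem stmt2 {N : ℕ} (G : Matrix (Fin N) (Fin N) ℂ) (lam : ℂ) :
    (lam • (1 : Matrix (Fin N) (Fin N) ℂ) - G).det =
      ∑ k ∈ Finset.range (N + 1), lam ^ k *
        ∑ᶠ f ∈ {f : Option (Fin N) → Option (Option (Fin N)) |
            IsForest f ∧ f none = none ∧ (roots f).card = k + 1},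
          forestProd (daggerWeight G) f := by
  rw [sub_eq_add_neg, ← groundedLaplacian_daggerWeight, det_smul_one_add_groundedLaplacian,
    sum_range_pow_mul_finsum_forests _ _ (Fintype.card_fin N).le]
  refine Finset.sum_congr rfl fun φ _ => ?_
  rw [isForest_extendNone_iff, prod_elim_eq_pow_mul_forestProd]
end
end

section
/- Let G be an N×N matrix and n ∈ {1,...,N}. Let G_nn be the principal submatrix obtained by deleting row n and column n. Then det(λI - G_nn) = Σ_{k=0}^{N-1} λ^k Σ_{F ∈ F^k_{{†,n}}} π_F, where F^k_{{†,n}} is the set of spanning forests of the augmented digraph G† with k+2 trees whose root set contains both † and n. -/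
open scoped Classical
open Finset

noncomputable section

/-!
Row `i` of `λ • 1 - G_nn` is `λ eᵢ + Σ_v g†ᵢᵥ (eᵢ - e_v)` over all vertices `v` of `G†`, where
`e_† = e_n = 0` and the loop `i → i` contributes `0`. Expanding the determinant multilinearly in
the rows, the terms are indexed by a choice, at every vertex `i ≠ n`, of either the `λ`-term
(`i` becomes a root) or an arc out of `i`: that is, by the maps `F` with `F † = F n = none`. The
term of `F` is `λ ^ (#roots - 2) · π_F · det (1 - P)`, with `P` the successor matrix of `F` on the
vertices `≠ †, n`. If `F` is a forest, ordering the vertices by the size of their reachable set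
makes `1 - P` unitriangular, so the determinant is `1`; if `F` has a circuit, the indicator of the
vertices from which a circuit is reachable lies in the kernel of `1 - P`, so it is `0`.
-/

section Forest

variable {V : Type*} {f : V → Option V}

theorem FStep.unique {a b c : V} (hb : FStep f a b) (hc : FStep f a c) : b = c :=
  Option.some_injective _ (hb.symm.trans hc)

theorem IsForest.card_reach_lt [Fintype V] (hf : IsForest f) {a b : V} (h : FStep f a b) :
    #{x | Reach f b x} < #{x | Reach f a x} := by
  refine card_lt_card ⟨fun x hx => ?_, fun hsub => ?_⟩
  · simp only [mem_filter, mem_univ, true_and] at hx ⊢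
    exact .head h hx
  · have hba : Reach f b a := by simpa using hsub (mem_filter.mpr ⟨mem_univ _, .refl⟩)
    exact hf a (.head' h hba)

def ReachesCycle (f : V → Option V) (a : V) : Prop :=
  ∃ c, Reach f a c ∧ Relation.TransGen (FStep f) c c

theorem not_reachesCycle_of_eq_none {a : V} (ha : f a = none) : ¬ ReachesCycle f a := by
  rintro ⟨c, hac, hc⟩
  rcases Relation.ReflTransGen.cases_head hac with rfl | ⟨b, hab, -⟩
  · obtain ⟨b, hab, -⟩ := Relation.TransGen.head'_iff.mp hc
    simp [FStep, ha] at hab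
  · simp [FStep, ha] at hab

theorem FStep.reachesCycle_iff {a b : V} (hab : FStep f a b) :
    ReachesCycle f a ↔ ReachesCycle f b := by
  refine ⟨fun ⟨c, hac, hc⟩ => ?_, fun ⟨c, hbc, hc⟩ => ⟨c, .head hab hbc, hc⟩⟩
  rcases Relation.ReflTransGen.cases_head hac with rfl | ⟨b', hab', hb'c⟩
  · obtain ⟨b', hab', hb'a⟩ := Relation.TransGen.head'_iff.mp hc
    exact ⟨a, hab.unique hab' ▸ hb'a, hc⟩
  · exact ⟨c, hab.unique hab' ▸ hb'c, hc⟩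

theorem isForest_iff_of_injective {ι : Type*} {g : ι → Option ι} {e : ι → V}
    (he : Function.Injective e) (hdom : ∀ v w, FStep f v w → v ∈ Set.range e)
    (hg : ∀ i j, FStep g i j ↔ FStep f (e i) (e j)) : IsForest g ↔ IsForest f := by
  refine ⟨fun hforest v hv => ?_, fun hforest i hi => hforest (e i) (hi.lift e (hg · · |>.mp))⟩
  have lift : ∀ {a b}, Relation.TransGen (FStep f) a b → (∃ c, FStep f b c) →
      ∃ i j, e i = a ∧ e j = b ∧ Relation.TransGen (FStep g) i j := by
    intro a b hab
    induction hab with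
    | single h =>
      rintro ⟨c, hc⟩
      obtain ⟨i, rfl⟩ := hdom _ _ h
      obtain ⟨j, rfl⟩ := hdom _ _ hc
      exact ⟨i, j, rfl, rfl, .single ((hg i j).mpr h)⟩
    | tail _ hbc ih =>
      rintro ⟨d, hd⟩
      obtain ⟨i, j, rfl, rfl, hij⟩ := ih ⟨_, hbc⟩
      obtain ⟨k, rfl⟩ := hdom _ _ hd
      exact ⟨i, k, rfl, rfl, hij.tail ((hg j k).mpr hbc)⟩
  obtain ⟨w, hvw, -⟩ := Relation.TransGen.head'_iff.mp hv
  obtain ⟨i, j, rfl, hji, hij⟩ := lift hv ⟨w, hvw⟩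
  exact hforest i (he hji ▸ hij)

end Forest

theorem Fintype.prod_elim_eq_pow_card_mul_prod {ι α M : Type*} [Fintype ι] [CommMonoid M]
    (c : ι → Option α) (a : M) (w : ι → α → M) :
    ∏ i, (c i).elim a (w i) = a ^ #{i | c i = none} * ∏ i, (c i).elim 1 (w i) := by
  have h : ∀ i, (c i).elim a (w i) = (if c i = none then a else 1) * (c i).elim 1 (w i) := by
    intro i; cases c i <;> simp
  rw [Finset.prod_congr rfl fun i _ => h i, Finset.prod_mul_distrib, Finset.prod_ite,
    Finset.prod_const, Finset.prod_const_one, mul_one]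

namespace Matrix

variable {ι α K : Type*} [Fintype ι] [DecidableEq ι] [CommRing K]

theorem det_of_sum_smul [Fintype α] (w : ι → α → K) (r : ι → α → ι → K) :
    (of fun i => ∑ a, w i a • r i a).det =
      ∑ f : ι → α, (∏ i, w i (f i)) * (of fun i => r i (f i)).det := by
  change (detRowAlternating : (ι → K) [⋀^ι]→ₗ[K] K).toMultilinearMap
    (fun i => ∑ a, w i a • r i a) = _
  rw [MultilinearMap.map_sum]
  refine sum_congr rfl fun f _ => ?_
  rw [MultilinearMap.map_smul_univ, smul_eq_mul]
  rfl

theorem det_eq_prod_diag_of_eq_zero_of_le (M : Matrix ι ι K) (b : ι → ℕ)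
    (hM : ∀ i j, i ≠ j → b i ≤ b j → M i j = 0) : M.det = ∏ i, M i i := by
  let : LinearOrder ι := LinearOrder.lift' (fun i => toLex (b i, Fintype.equivFin ι i))
    fun i j h => (Fintype.equivFin ι).injective (Prod.ext_iff.mp (toLex.injective h)).2
  refine det_of_isLowerTriangular M fun i j (hij : i < j) => hM i j hij.ne ?_
  rcases Prod.Lex.toLex_lt_toLex.mp hij with h | h
  exacts [h.le, h.1.le]

def succMatrix (g : ι → Option ι) : Matrix ι ι K := of fun i j => if g i = some j then 1 else 0

theorem succMatrix_mulVec (g : ι → Option ι) (u : ι → K) (i : ι) :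
    (succMatrix g *ᵥ u) i = (g i).elim 0 u := by
  cases h : g i <;> simp [succMatrix, mulVec, dotProduct, h]

theorem det_one_sub_succMatrix_of_isForest {g : ι → Option ι} (hg : IsForest g) :
    (1 - succMatrix g : Matrix ι ι K).det = 1 := by
  rw [det_eq_prod_diag_of_eq_zero_of_le _ (fun i => #{x | Reach g i x})]
  · refine prod_eq_one fun i _ => ?_
    have : g i ≠ some i := fun h => hg i (.single h)
    simp [succMatrix, this]
  · intro i j hij hle
    have : g i ≠ some j := fun h => (hg.card_reach_lt h).not_ge hle
    simp [succMatrix, hij, this]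

theorem det_one_sub_succMatrix_of_not_isForest {g : ι → Option ι} (hg : ¬ IsForest g) :
    (1 - succMatrix g : Matrix ι ι K).det = 0 := by
  obtain ⟨v, hv⟩ := not_forall_not.mp hg
  let u : ι → K := fun i => if ReachesCycle g i then 1 else 0
  refine det_eq_zero_of_mulVec_eq_zero_of_mem_nonZeroDivisors (v := u) (i := v) ?_ ?_
  · ext i
    rw [sub_mulVec, one_mulVec, Pi.sub_apply, succMatrix_mulVec, Pi.zero_apply, sub_eq_zero]
    cases h : g i with
    | none => simp [u, not_reachesCycle_of_eq_none h]
    | some j => simp [u, FStep.reachesCycle_iff h]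
  · rw [show u v = 1 from if_pos ⟨v, .refl, hv⟩]
    exact one_mem _

theorem det_one_sub_succMatrix (g : ι → Option ι) :
    (1 - succMatrix g : Matrix ι ι K).det = if IsForest g then 1 else 0 := by
  split_ifs with hg
  exacts [det_one_sub_succMatrix_of_isForest hg, det_one_sub_succMatrix_of_not_isForest hg]

end Matrix

section Grounded

variable {N : ℕ} (n : Fin N)

def freeVertex (v : Option (Fin N)) : Option {i : Fin N // i ≠ n} :=
  v.bind (Equiv.optionSubtypeNe n).symm

theorem freeVertex_eq_some_iff {v : Option (Fin N)} {i : {i : Fin N // i ≠ n}} :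
    freeVertex n v = some i ↔ v = some i.1 := by
  cases v with
  | none => simp [freeVertex]
  | some v => rw [freeVertex, Option.bind_some, Equiv.symm_apply_eq]; simp

theorem freeVertex_some (i : {i : Fin N // i ≠ n}) : freeVertex n (some i.1) = some i :=
  (freeVertex_eq_some_iff n).mpr rfl

def freeSucc (F : Option (Fin N) → Option (Option (Fin N))) :
    {i : Fin N // i ≠ n} → Option {i : Fin N // i ≠ n} :=
  fun i => (F (some i.1)).bind (freeVertex n)

theorem isForest_freeSucc_iff {F : Option (Fin N) → Option (Option (Fin N))}
    (h0 : F none = none) (hn : F (some n) = none) : IsForest (freeSucc n F) ↔ IsForest F := by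
  refine isForest_iff_of_injective (e := fun i => some i.1)
    (fun i j h => Subtype.ext (Option.some_injective _ h)) ?_ fun i j => ?_
  · rintro (_ | v) w h
    · simp [FStep, h0] at h
    · have : v ≠ n := by rintro rfl; simp [FStep, hn] at h
      exact ⟨⟨v, this⟩, rfl⟩
  · simp [FStep, freeSucc, Option.bind_eq_some_iff, freeVertex_eq_some_iff]

theorem sum_eq_sum_restrict {α M : Type*} [Fintype α] [AddCommMonoid M]
    (φ : ({i : Fin N // i ≠ n} → Option α) → M) :
    ∑ f, φ f = ∑ F : Option (Fin N) → Option α with F none = none ∧ F (some n) = none,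
      φ (fun i => F (some i.1)) := by
  refine sum_nbij' (fun f v => (freeVertex n v).bind f) (fun F i => F (some i.1)) ?_ ?_ ?_ ?_ ?_
  · simp [freeVertex]
  · simp
  · intro f _
    simp [freeVertex_some]
  · rintro F hF
    funext v
    rcases v with _ | v
    · simp [freeVertex, (mem_filter.mp hF).2.1]
    · rcases eq_or_ne v n with rfl | hv
      · simp [freeVertex, (mem_filter.mp hF).2.2]
      · simp [freeVertex_some n ⟨v, hv⟩]
  · intro f _
    simp [freeVertex_some]

theorem card_roots_eq {F : Option (Fin N) → Option (Option (Fin N))}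
    (h0 : F none = none) (hn : F (some n) = none) :
    #(roots F) = #{i : {i : Fin N // i ≠ n} | F (some i.1) = none} + 2 := by
  rw [roots, card_filter, Fintype.sum_option, Fintype.sum_eq_add_sum_subtype_ne _ n, card_filter]
  simp [h0, hn]
  ring

theorem sum_isForest_eq_sum_range {R : Type*} [CommSemiring R] (lam : R)
    (φ : (Option (Fin N) → Option (Option (Fin N))) → R) :
    ∑ F : Option (Fin N) → Option (Option (Fin N)) with F none = none ∧ F (some n) = none,
        (if IsForest F then lam ^ #{i : {i : Fin N // i ≠ n} | F (some i.1) = none} * φ F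
          else 0) =
      ∑ k ∈ range N, lam ^ k *
        ∑ᶠ f ∈ {f : Option (Fin N) → Option (Option (Fin N)) |
            IsForest f ∧ f none = none ∧ f (some n) = none ∧ (roots f).card = k + 2}, φ f := by
  rw [← sum_filter, ← sum_fiberwise_of_maps_to (t := range N)
    (g := fun F => #{i : {i : Fin N // i ≠ n} | F (some i.1) = none})]
  · refine sum_congr rfl fun k _ => ?_
    rw [finsum_mem_eq_toFinset_sum, mul_sum]
    symm
    refine sum_congr ?_ fun F hF => by rw [(mem_filter.mp hF).2]
    ext F
    simp only [mem_filter, mem_univ, true_and, Set.mem_toFinset, Set.mem_ofPred_eq]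
    constructor
    · rintro ⟨hF, h0, hn, hk⟩
      exact ⟨⟨⟨h0, hn⟩, hF⟩, by rw [card_roots_eq n h0 hn] at hk; omega⟩
    · rintro ⟨⟨⟨h0, hn⟩, hF⟩, hk⟩
      exact ⟨hF, h0, hn, by rw [card_roots_eq n h0 hn, hk]⟩
  · intro F hF
    simp only [mem_filter, mem_univ, true_and] at hF
    have hroots := card_roots_eq n hF.1.1 hF.1.2
    have hle : #(roots F) ≤ N + 1 := by simpa using card_le_univ (roots F)
    rw [mem_range]
    omega

variable {K : Type*} [CommRing K]

/-- The row of `λ • 1 - G_nn` contributed by the choice `c` at the vertex `i`: `c = none` stands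
for the diagonal term `λ`, and `c = some v` for the arc `i → v`, whose row `eᵢ - e_v` has
`e_† = e_n = 0`. -/
def arcRow (i : {i : Fin N // i ≠ n}) (c : Option (Option (Fin N))) :
    {i : Fin N // i ≠ n} → K :=
  (1 : Matrix _ _ K) i - fun j => if c.bind (freeVertex n) = some j then 1 else 0

theorem of_arcRow_eq_one_sub_succMatrix (F : Option (Fin N) → Option (Option (Fin N))) :
    (Matrix.of fun i => arcRow n i (F (some i.1)) : Matrix _ _ K) =
      1 - Matrix.succMatrix (freeSucc n F) :=
  rfl

theorem arcRow_self (i : {i : Fin N // i ≠ n}) : arcRow (K := K) n i (some (some i.1)) = 0 := by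
  ext j
  simp [arcRow, freeVertex_eq_some_iff, Matrix.one_apply, Subtype.ext_iff]

theorem smul_one_sub_submatrix_eq_sum_arcRow (G : Matrix (Fin N) (Fin N) K) (lam : K) :
    lam • (1 : Matrix {i : Fin N // i ≠ n} {i : Fin N // i ≠ n} K) -
        G.submatrix (fun i : {i : Fin N // i ≠ n} => (i : Fin N))
          (fun j : {i : Fin N // i ≠ n} => (j : Fin N)) =
      Matrix.of fun i => ∑ c, c.elim lam (daggerWeight G (some i.1)) • arcRow n i c := by
  -- the loop `i → i` has weight `0` in `G†`, but its row vanishes anyway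
  have hloop : ∀ i u, daggerWeight G (some i.1) (some u) • arcRow n i (some (some u)) =
      G i u • arcRow (K := K) n i (some (some u)) := by
    intro i u
    rcases eq_or_ne i.1 u with rfl | h
    · simp [arcRow_self]
    · simp [daggerWeight, h]
  ext i j
  simp only [Matrix.of_apply, Fintype.sum_option, Option.elim, hloop]
  simp [arcRow, daggerWeight, freeVertex_eq_some_iff, Matrix.one_apply, Finset.sum_apply, mul_sub,
    Finset.sum_sub_distrib]
  ring

theorem forestProd_eq_prod_free (w : Option (Fin N) → Option (Fin N) → K)
    {F : Option (Fin N) → Option (Option (Fin N))} (h0 : F none = none) (hn : F (some n) = none) :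
    forestProd w F = ∏ i : {i : Fin N // i ≠ n}, (F (some i.1)).elim 1 (w (some i.1)) := by
  rw [forestProd, Fintype.prod_option, Fintype.prod_eq_mul_prod_subtype_ne _ n]
  simp only [h0, hn, one_mul]
  exact prod_congr rfl fun i _ => by cases F (some i.1) <;> rfl

theorem prod_mul_det_arcRow_eq (G : Matrix (Fin N) (Fin N) K) (lam : K)
    {F : Option (Fin N) → Option (Option (Fin N))} (h0 : F none = none) (hn : F (some n) = none) :
    (∏ i : {i : Fin N // i ≠ n}, (F (some i.1)).elim lam (daggerWeight G (some i.1))) *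
        (Matrix.of fun i => arcRow n i (F (some i.1))).det =
      if IsForest F then
        lam ^ #{i : {i : Fin N // i ≠ n} | F (some i.1) = none} * forestProd (daggerWeight G) F
      else 0 := by
  rw [of_arcRow_eq_one_sub_succMatrix, Matrix.det_one_sub_succMatrix,
    isForest_freeSucc_iff n h0 hn, Fintype.prod_elim_eq_pow_card_mul_prod,
    ← forestProd_eq_prod_free n _ h0 hn]
  split_ifs <;> simp

end Grounded

/-- det(λI - G_nn) = Σ_{k=0}^{N-1} λ^k Σ_{F ∈ F^k_{†,n}} π_F. -/
theorem stmt5 {N : ℕ} (G : Matrix (Fin N) (Fin N) ℂ) (n : Fin N) (lam : ℂ) :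
    (lam • (1 : Matrix {i : Fin N // i ≠ n} {i : Fin N // i ≠ n} ℂ) -
        G.submatrix (fun i : {i : Fin N // i ≠ n} => (i : Fin N))
          (fun j : {i : Fin N // i ≠ n} => (j : Fin N))).det =
      ∑ k ∈ Finset.range N, lam ^ k *
        ∑ᶠ f ∈ {f : Option (Fin N) → Option (Option (Fin N)) |
            IsForest f ∧ f none = none ∧ f (some n) = none ∧ (roots f).card = k + 2},
          forestProd (daggerWeight G) f := by
  rw [smul_one_sub_submatrix_eq_sum_arcRow, Matrix.det_of_sum_smul, sum_eq_sum_restrict n]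
  beta_reduce
  rw [sum_congr rfl fun F hF =>
    prod_mul_det_arcRow_eq n G lam (mem_filter.mp hF).2.1 (mem_filter.mp hF).2.2]
  exact sum_isForest_eq_sum_range n lam _
end
end

section
/- If G is a matrix with nonnegative off-diagonal entries and nonpositive row sums (so that all arc weights g_ij, i≠j, and g_{i†} = -Σ_j g_ij are nonnegative), then every coefficient of the characteristic polynomial det(λI - G) = Σ_k λ^k c_k satisfies c_k ≥ 0, since c_k = Σ_{F ∈ F^k_†} π_F is a sum of products of nonnegative numbers. -/
open scoped Classical
open Finset

noncomputable section

/-!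
Expand `det (X • 1 - G)` over permutations and split each diagonal entry as
`X - g_ii = X + g_{i†} + ∑_{j ≠ i} g_ij`. A term of the expansion is then a choice, for every
vertex `i`, of either `X` or an arc out of `i` in `G†`, together with a permutation that moves
every point it moves along a chosen arc; the signs of the entries `-g_ij` combine with the sign
of the permutation to `(-1)^(number of its cycles)`. For fixed arcs these permutations are the
unions of sets of circuits of the chosen digraph, so their signed count is `1` if the digraph has
no circuit and `0` otherwise (toggling one circuit is a sign-reversing involution). What
survives are the spanning forests of `G†` whose roots are `†` and the `k` vertices that chose
`X`, each weighted by the product of its arc weights, which are all nonnegative.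
-/
open Equiv Relation

section PartialMaps

variable {V : Type*} {p : V → Option V}

def ArcCompatible (p : V → Option V) (σ : Perm V) : Prop :=
  ∀ x, σ x ≠ x → p x = some (σ x)

namespace ArcCompatible

variable {σ : Perm V} {x y : V}

theorem apply_ne_of_reach (hσ : ArcCompatible p σ) (hx : σ x ≠ x) (hxy : Reach p x y) :
    σ y ≠ y := by
  induction hxy with
  | refl => exact hx
  | @tail y z _ hyz ih =>
    have hσy : σ y = z := Option.some_injective _ ((hσ y ih).symm.trans hyz)
    rw [← hσy]
    exact fun h => ih (σ.injective h)

theorem reach_of_sameCycle [Finite V] (hσ : ArcCompatible p σ) (h : σ.SameCycle x y) :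
    Reach p x y := by
  obtain ⟨n, rfl⟩ := h.exists_nat_pow_eq
  clear h
  induction n with
  | zero => exact ReflTransGen.refl
  | succ n ih =>
    rw [pow_succ', Perm.mul_apply]
    by_cases hn : σ ((σ ^ n) x) = (σ ^ n) x
    · rwa [hn]
    · exact ih.tail (hσ _ hn)

theorem transGen_self [Finite V] (hσ : ArcCompatible p σ) (hx : σ x ≠ x) :
    TransGen (FStep p) x x :=
  TransGen.head' (hσ x hx) (hσ.reach_of_sameCycle (Perm.sameCycle_apply_left.mpr (.refl σ x)))

theorem eq_one [Finite V] (hσ : ArcCompatible p σ) (hp : IsForest p) : σ = 1 :=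
  Perm.ext fun x => by_contra fun hx => hp x (hσ.transGen_self hx)

end ArcCompatible

/-- On the strongly connected component of a vertex lying on a circuit, the arcs of `p` form a
bijection, hence a cyclic permutation. -/
theorem exists_isCycle_arcCompatible [Finite V] (hp : ∀ x, p x ≠ some x) {v : V}
    (hv : TransGen (FStep p) v v) : ∃ c : Perm V, c.IsCycle ∧ ArcCompatible p c ∧ c v ≠ v := by
  set O : Set V := {x | Reach p v x ∧ Reach p x v}
  set F : V → V := fun x => (p x).getD x
  have hF : ∀ {x y}, FStep p x y → F x = y := fun h => by simp [F, show p _ = _ from h]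
  have hnext : ∀ x ∈ O, FStep p x (F x) ∧ F x ∈ O := by
    rintro x ⟨hvx, hxv⟩
    have hxv' : TransGen (FStep p) x v := by
      rcases reflTransGen_iff_eq_or_transGen.mp hxv with rfl | h
      exacts [hv, h]
    obtain ⟨y, hxy, hyv⟩ := TransGen.head'_iff.mp hxv'
    rw [hF hxy]
    exact ⟨hxy, hvx.tail hxy, hyv⟩
  have hsurj : Set.SurjOn F O O := by
    rintro y ⟨hvy, hyv⟩
    have hvy' : TransGen (FStep p) v y := by
      rcases reflTransGen_iff_eq_or_transGen.mp hvy with rfl | h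
      exacts [hv, h]
    obtain ⟨x, hvx, hxy⟩ := TransGen.tail'_iff.mp hvy'
    exact ⟨x, ⟨hvx, hyv.head hxy⟩, hF hxy⟩
  have hbij :=
    ((Set.toFinite O).surjOn_iff_bijOn_of_mapsTo fun x hx => (hnext x hx).2).mp hsurj
  set c : Perm V := Perm.ofSubtype (hbij.equiv F)
  have hc_mem : ∀ x ∈ O, c x = F x := fun x hx => Perm.ofSubtype_apply_of_mem _ hx
  have hc_ne : ∀ x, c x ≠ x → x ∈ O := fun x hx => by
    by_contra h
    exact hx (Perm.ofSubtype_apply_of_not_mem _ h)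
  have hvO : v ∈ O := ⟨.refl, .refl⟩
  have hcv : c v ≠ v := by
    have hvF := (hnext v hvO).1
    rw [hc_mem v hvO]
    intro h
    rw [h] at hvF
    exact hp v hvF
  have hsame : ∀ y, Reach p v y → Reach p y v → c.SameCycle v y := by
    intro y hvy
    induction hvy with
    | refl => exact fun _ => .refl c v
    | @tail x y hvx hxy ih =>
      intro hyv
      have hxO : x ∈ O := ⟨hvx, hyv.head hxy⟩
      rw [← hF hxy, ← hc_mem x hxO]
      exact Perm.sameCycle_apply_right.mpr (ih hxO.2)
  refine ⟨c, ⟨v, hcv, fun y hy => hsame y (hc_ne y hy).1 (hc_ne y hy).2⟩, fun x hx => ?_, hcv⟩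
  rw [hc_mem x (hc_ne x hx)]
  exact (hnext x (hc_ne x hx)).1

end PartialMaps

section CycleCancellation

variable {V R : Type*} [Fintype V] [DecidableEq V] [CommRing R] {p : V → Option V}

/-- Toggling the circuit through `v` is a sign-reversing involution on arc-compatible
permutations. -/
theorem sum_arcCompatible_neg_one_pow_eq_zero (hp : ∀ x, p x ≠ some x) {v : V}
    (hv : TransGen (FStep p) v v) :
    ∑ σ : Perm V with ArcCompatible p σ, (-1 : R) ^ σ.cycleType.card = 0 := by
  obtain ⟨c, hc, hcp, hcv⟩ := exists_isCycle_arcCompatible hp hv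
  have fix_of_fix : ∀ σ, ArcCompatible p σ → σ v = v → ∀ x, c x ≠ x → σ x = x := by
    intro σ hσ hσv x hx
    by_contra h
    exact hσ.apply_ne_of_reach h (hcp.reach_of_sameCycle (hc.sameCycle hx hcv)) hσv
  have eq_of_move : ∀ σ, ArcCompatible p σ → σ v ≠ v → ∀ x, c x ≠ x → σ x = c x := by
    intro σ hσ hσv x hx
    have := hσ x (hσ.apply_ne_of_reach hσv (hcp.reach_of_sameCycle (hc.sameCycle hcv hx)))
    exact Option.some_injective _ (this.symm.trans (hcp x hx))
  have hc_apply : ∀ x, c (c x) ≠ c x ↔ c x ≠ x := fun x => c.injective.ne_iff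
  have hc_inv : ∀ x, c x ≠ x → c (c⁻¹ x) ≠ c⁻¹ x := fun x hx => by
    rw [Perm.coe_inv, apply_symm_apply, Ne, eq_symm_apply]
    exact hx
  have hmul : ∀ σ, ArcCompatible p σ ∧ σ v = v →
      (ArcCompatible p (σ * c) ∧ ¬(σ * c) v = v) ∧
        (-1 : R) ^ (σ * c).cycleType.card = -(-1) ^ σ.cycleType.card := by
    rintro σ ⟨hσ, hσv⟩
    have hdisj : σ.Disjoint c := fun x => by
      by_cases hx : c x = x
      exacts [.inr hx, .inl (fix_of_fix σ hσ hσv x hx)]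
    refine ⟨⟨fun x hx => ?_, ?_⟩, ?_⟩
    · by_cases hcx : c x = x
      · rw [Perm.mul_apply, hcx] at hx ⊢
        exact hσ x hx
      · rw [Perm.mul_apply, fix_of_fix σ hσ hσv _ ((hc_apply x).mpr hcx)]
        exact hcp x hcx
    · rwa [Perm.mul_apply, fix_of_fix σ hσ hσv _ ((hc_apply v).mpr hcv)]
    · rw [hdisj.cycleType_mul, hc.cycleType, Multiset.card_add, Multiset.card_singleton,
        pow_succ, mul_neg_one]
  have hmul_inv : ∀ τ, ArcCompatible p τ ∧ ¬τ v = v →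
      ArcCompatible p (τ * c⁻¹) ∧ (τ * c⁻¹) v = v := by
    rintro τ ⟨hτ, hτv⟩
    refine ⟨fun x hx => ?_, ?_⟩
    · by_cases hcx : c x = x
      · rw [Perm.mul_apply, Perm.inv_eq_iff_eq.mpr hcx.symm] at hx ⊢
        exact hτ x hx
      · rw [Perm.mul_apply, eq_of_move τ hτ hτv _ (hc_inv x hcx),
          Perm.coe_inv, apply_symm_apply] at hx
        exact absurd rfl hx
    · rw [Perm.mul_apply, eq_of_move τ hτ hτv _ (hc_inv v hcv), Perm.coe_inv, apply_symm_apply]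
  rw [← sum_filter_add_sum_filter_not _ (fun σ => σ v = v), filter_filter, filter_filter]
  calc _ = ∑ σ : Perm V with ArcCompatible p σ ∧ σ v = v,
          ((-1 : R) ^ σ.cycleType.card + (-1) ^ (σ * c).cycleType.card) := by
        rw [sum_add_distrib]
        congr 1
        refine (sum_nbij' (· * c) (· * c⁻¹) (fun σ hσ => ?_) (fun τ hτ => ?_)
          (fun σ _ => mul_inv_cancel_right σ c) (fun τ _ => inv_mul_cancel_right τ c)
          (fun _ _ => rfl)).symm
        · simpa using (hmul σ (mem_filter.mp hσ).2).1
        · simpa using hmul_inv τ (mem_filter.mp hτ).2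
    _ = 0 := sum_eq_zero fun σ hσ => by rw [(hmul σ (mem_filter.mp hσ).2).2, add_neg_cancel]

theorem sum_arcCompatible_neg_one_pow (hp : ∀ x, p x ≠ some x) :
    ∑ σ : Perm V with ArcCompatible p σ, (-1 : R) ^ σ.cycleType.card =
      if IsForest p then 1 else 0 := by
  split_ifs with hf
  · have h1 : ({σ : Perm V | ArcCompatible p σ} : Finset (Perm V)) = {1} := by
      ext σ
      simp only [mem_filter, mem_univ, true_and, mem_singleton]
      exact ⟨fun hσ => hσ.eq_one hf, fun h x hx => absurd (h ▸ rfl) hx⟩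
    rw [h1, sum_singleton, Perm.cycleType_one, Multiset.card_zero, pow_zero]
  · obtain ⟨v, hv⟩ : ∃ v, TransGen (FStep p) v v := by simpa [IsForest] using hf
    exact sum_arcCompatible_neg_one_pow_eq_zero hp hv

end CycleCancellation

section Expansion

open Polynomial

variable {V K : Type*} [Fintype V] [DecidableEq V] [CommRing K]

def augmentedWeight (M : Matrix V V K) (i : V) : Option V → K
  | some j => if i = j then 0 else M i j
  | none => -∑ j, M i j

/-- The choices for row `i` when expanding `det (X • 1 - M)`: `none` picks the variable `X`,
`some c` picks the arc from `i` to `c` in the augmented digraph (`c = none` being `†`). -/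
def rowTerm (M : Matrix V V K) (i : V) : Option (Option V) → K[X]
  | none => X
  | some c => C (augmentedWeight M i c)

theorem sum_rowTerm (M : Matrix V V K) (i : V) : ∑ c, rowTerm M i c = M.charmatrix i i := by
  have hrow : ∑ j, (if i = j then 0 else M i j) = ∑ j, M i j - M i i := by
    rw [← sum_erase_eq_sub (mem_univ i), ← filter_ne univ i, sum_filter]
    simp only [ite_not]
  rw [Fintype.sum_option, Fintype.sum_option]
  simp only [rowTerm, augmentedWeight]
  rw [← map_sum, hrow, Matrix.charmatrix_apply_eq, map_neg, map_sub]
  ring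

theorem sum_rowTerm_filter (M : Matrix V V K) (i j : V) :
    ∑ c with (j ≠ i → c = some (some j)), rowTerm M i c =
      (if j = i then 1 else -1) * M.charmatrix i j := by
  by_cases hji : j = i
  · subst hji
    rw [filter_true_of_mem fun c _ h => absurd rfl h, sum_rowTerm, if_pos rfl, one_mul]
  · simp only [ne_eq, hji, not_false_eq_true, forall_const, filter_eq', mem_univ, if_true,
      sum_singleton, if_false]
    rw [Matrix.charmatrix_apply_ne _ _ _ (Ne.symm hji), neg_one_mul, neg_neg]
    simp only [rowTerm, augmentedWeight, if_neg (Ne.symm hji)]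

theorem neg_one_pow_mul_prod_charmatrix (M : Matrix V V K) (σ : Perm V) :
    (-1) ^ #σ.support * ∏ i, M.charmatrix i (σ i) =
      ∑ g : V → Option (Option V) with ArcCompatible (fun i => (g i).join) σ,
        ∏ i, rowTerm M i (g i) := by
  have hsign : (-1 : K[X]) ^ #σ.support = ∏ i, if σ i = i then 1 else -1 := by
    rw [prod_ite, prod_const_one, one_mul, prod_const]
    rfl
  rw [hsign, ← prod_mul_distrib]
  simp_rw [← sum_rowTerm_filter, prod_univ_sum]
  congr 1
  ext g
  simp [Fintype.mem_piFinset, ArcCompatible, Option.join_eq_some_iff]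

theorem sign_smul_eq_neg_one_pow_mul {R : Type*} [Ring R] (σ : Perm V) (x : R) :
    Perm.sign σ • x = (-1) ^ σ.cycleType.card * ((-1) ^ #σ.support * x) := by
  rw [Perm.sign_of_cycleType, Perm.sum_cycleType, Units.smul_def, ← mul_assoc, ← pow_add,
    add_comm]
  simp

theorem charpoly_eq_sum_isForest (M : Matrix V V K) :
    M.charpoly = ∑ g : V → Option (Option V) with IsForest (fun i => (g i).join),
      ∏ i, rowTerm M i (g i) := by
  have hinner : ∀ g : V → Option (Option V),
      (∏ i, rowTerm M i (g i)) * ∑ σ : Perm V with ArcCompatible (fun i => (g i).join) σ,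
        (-1) ^ σ.cycleType.card =
      if IsForest (fun i => (g i).join) then ∏ i, rowTerm M i (g i) else 0 := by
    intro g
    by_cases hp : ∀ x, (g x).join ≠ some x
    · rw [sum_arcCompatible_neg_one_pow hp, mul_ite, mul_one, mul_zero]
    · obtain ⟨i, hi⟩ := not_forall_not.mp hp
      have hprod : ∏ i, rowTerm M i (g i) = 0 :=
        prod_eq_zero (mem_univ i)
          (by simp [Option.join_eq_some_iff.mp hi, rowTerm, augmentedWeight])
      rw [hprod, zero_mul, if_neg fun hf => hf i (TransGen.single hi)]
  calc M.charpoly = ∑ σ : Perm V, Perm.sign σ • ∏ i, M.charmatrix i (σ i) := by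
        rw [Matrix.charpoly, ← Matrix.det_transpose, Matrix.det_apply]
        rfl
    _ = ∑ σ : Perm V, ∑ g : V → Option (Option V) with ArcCompatible (fun i => (g i).join) σ,
          (-1) ^ σ.cycleType.card * ∏ i, rowTerm M i (g i) := by
        simp_rw [sign_smul_eq_neg_one_pow_mul, neg_one_pow_mul_prod_charmatrix, mul_sum]
    _ = ∑ g : V → Option (Option V), (∏ i, rowTerm M i (g i)) *
          ∑ σ : Perm V with ArcCompatible (fun i => (g i).join) σ, (-1) ^ σ.cycleType.card := by
        rw [sum_comm' (t' := univ) (s' := fun g => {σ | ArcCompatible (fun i => (g i).join) σ})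
          (by simp)]
        simp_rw [mul_sum, mul_comm]
    _ = _ := by simp_rw [hinner, sum_filter]

theorem prod_rowTerm (M : Matrix V V K) (g : V → Option (Option V)) :
    ∏ i, rowTerm M i (g i) =
      C (∏ i, (g i).elim 1 (augmentedWeight M i)) * X ^ #{i | g i = none} := by
  have hterm : ∀ i c, rowTerm M i c =
      C (c.elim 1 (augmentedWeight M i)) * X ^ (if c = none then 1 else 0) := by
    rintro i (_ | c) <;> simp [rowTerm]
  simp_rw [hterm, prod_mul_distrib, map_prod, prod_pow_eq_pow_sum, sum_boole, Nat.cast_id]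

theorem coeff_charpoly_eq_sum (M : Matrix V V K) (k : ℕ) :
    M.charpoly.coeff k =
      ∑ g : V → Option (Option V) with IsForest (fun i => (g i).join) ∧ #{i | g i = none} = k,
        ∏ i, (g i).elim 1 (augmentedWeight M i) := by
  rw [charpoly_eq_sum_isForest, finsetSum_coeff, ← filter_filter]
  simp_rw [prod_rowTerm, coeff_C_mul_X_pow, @eq_comm _ k, sum_filter]

end Expansion

section AugmentedForests

variable {V : Type*}

theorem transGen_elim'_none_some_iff (g : V → Option (Option V)) {a b : V} :
    TransGen (FStep (Option.elim' none g)) (some a) (some b) ↔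
      TransGen (FStep fun i => (g i).join) a b := by
  refine ⟨fun h => ?_, fun h =>
    TransGen.lift some (fun _ _ hxy => Option.join_eq_some_iff.mp hxy) a b h⟩
  suffices ∀ y, TransGen (FStep (Option.elim' none g)) (some a) y →
      ∀ b, y = some b → TransGen (FStep fun i => (g i).join) a b from this _ h b rfl
  intro y hy
  induction hy with
  | single hab =>
    rintro b rfl
    exact .single (Option.join_eq_some_iff.mpr hab)
  | @tail y z _ hyz ih =>
    rintro b rfl
    cases y with
    | none => exact absurd hyz (by simp [FStep])
    | some c => exact (ih c rfl).tail (Option.join_eq_some_iff.mpr hyz)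

theorem isForest_elim'_none_iff (g : V → Option (Option V)) :
    IsForest (Option.elim' none g) ↔ IsForest fun i => (g i).join := by
  refine ⟨fun h a ha => h (some a) ((transGen_elim'_none_some_iff g).mpr ha), fun h v hv => ?_⟩
  cases v with
  | none =>
    obtain ⟨_, hstep, _⟩ := TransGen.head'_iff.mp hv
    exact absurd hstep (by simp [FStep])
  | some a => exact h a ((transGen_elim'_none_some_iff g).mp hv)

variable [Fintype V]

theorem card_roots_elim'_none (g : V → Option (Option V)) :
    #(roots (Option.elim' none g)) = #{i | g i = none} + 1 := by
  rw [roots, card_filter, Fintype.sum_option, card_filter, add_comm]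
  rfl

theorem forestProd_elim'_none {K : Type*} [CommRing K] (w : Option V → Option V → K)
    (g : V → Option (Option V)) :
    forestProd w (Option.elim' none g) = ∏ i, (g i).elim 1 (w (some i)) := by
  rw [forestProd, Fintype.prod_option]
  simp only [Option.elim', one_mul]
  refine prod_congr rfl fun i _ => ?_
  cases g i <;> rfl

theorem finsum_forestProd_eq_sum [DecidableEq V] {K : Type*} [CommRing K]
    (w : Option V → Option V → K) (k : ℕ) :
    ∑ᶠ f ∈ {f : Option V → Option (Option V) |
        IsForest f ∧ f none = none ∧ #(roots f) = k + 1}, forestProd w f =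
      ∑ g : V → Option (Option V) with IsForest (fun i => (g i).join) ∧ #{i | g i = none} = k,
        ∏ i, (g i).elim 1 (w (some i)) := by
  have hsome : ∀ f : Option V → Option (Option V), f none = none →
      Option.elim' none (f ∘ some) = f := fun f hf => funext fun v => by
    cases v
    exacts [hf.symm, rfl]
  rw [← finsum_mem_coe_finset]
  refine (finsum_mem_eq_of_bijOn (Option.elim' none) ⟨fun g hg => ?_, fun g _ g' _ h => ?_,
    fun f hf => ?_⟩ fun g _ => (forestProd_elim'_none w g).symm).symm
  · obtain ⟨hforest, hcard⟩ := (mem_filter.mp hg).2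
    exact ⟨(isForest_elim'_none_iff g).mpr hforest, rfl, by rw [card_roots_elim'_none, hcard]⟩
  · exact funext fun i => congrFun h (some i)
  · obtain ⟨hforest, hnone, hcard⟩ := hf
    refine ⟨f ∘ some, mem_filter.mpr ⟨mem_univ _, ?_, ?_⟩, hsome f hnone⟩
    · rwa [← isForest_elim'_none_iff, hsome f hnone]
    · have := card_roots_elim'_none (f ∘ some)
      rw [hsome f hnone, hcard] at this
      omega

end AugmentedForests

section Nonnegativity

variable {K : Type*} [CommRing K] [PartialOrder K] [IsOrderedRing K]

theorem forestProd_nonneg {V : Type*} [Fintype V] {w : V → V → K} (hw : ∀ a b, 0 ≤ w a b)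
    (f : V → Option V) : 0 ≤ forestProd w f :=
  Finset.prod_nonneg fun v _ => by
    cases f v
    exacts [zero_le_one, hw _ _]

theorem daggerWeight_nonneg {N : ℕ} {G : Matrix (Fin N) (Fin N) K}
    (hoff : ∀ i j, i ≠ j → 0 ≤ G i j) (hrow : ∀ i, ∑ j, G i j ≤ 0) :
    ∀ a b, 0 ≤ daggerWeight G a b
  | some i, some j => by
    by_cases hij : i = j
    · simp [daggerWeight, hij]
    · simpa [daggerWeight, hij] using hoff i j hij
  | some i, none => neg_nonneg.mpr (hrow i)
  | none, _ => le_rfl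

end Nonnegativity

/-- If G has nonnegative off-diagonal entries and nonpositive row sums, then each
coefficient of its characteristic polynomial is a signless sum of forest products
and hence nonnegative. -/
theorem stmt17 {N : ℕ} (G : Matrix (Fin N) (Fin N) ℝ)
    (hoff : ∀ i j, i ≠ j → 0 ≤ G i j) (hrow : ∀ i, ∑ j, G i j ≤ 0) :
    ∀ k, (Matrix.charpoly G).coeff k =
        (∑ᶠ f ∈ {f : Option (Fin N) → Option (Option (Fin N)) |
            IsForest f ∧ f none = none ∧ (roots f).card = k + 1},
          forestProd (daggerWeight G) f) ∧
      0 ≤ (Matrix.charpoly G).coeff k := by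
  intro k
  have hweight : ∀ i, daggerWeight G (some i) = augmentedWeight G i := fun i =>
    funext fun c => by cases c <;> rfl
  have hcoeff : G.charpoly.coeff k = ∑ᶠ f ∈ {f : Option (Fin N) → Option (Option (Fin N)) |
      IsForest f ∧ f none = none ∧ (roots f).card = k + 1}, forestProd (daggerWeight G) f := by
    rw [finsum_forestProd_eq_sum, coeff_charpoly_eq_sum]
    simp only [hweight]
  refine ⟨hcoeff, hcoeff ▸ finsum_nonneg fun f => finsum_nonneg fun _ => ?_⟩
  exact forestProd_nonneg (daggerWeight_nonneg hoff hrow) f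

end
end
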